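/- For every history H, H satisfies SER if and only if H ⊨ Int and there exists an acyclic directed labeled graph compatible with the hyper-polygraph of H. -/
import Mathlib


namespace DBIso

/-! ### Operations, transactions and histories -/

/-- An operation: a read `R(x,v)` or a write `W(x,v)` on key `x` with value `v`. -/
inductive Op (Key Val : Type) where
  | read  (k : Key) (v : Val)
  | write (k : Key) (v : Val)

variable {Key Val : Type}

/-- The key accessed by an operation. -/
def Op.key : Op Key Val → Key
  | .read k _ => k
  | .write k _ => k

/-- The value read or written by an operation. -/
def Op.val : Op Key Val → Val
  | .read _ w => w
  | .write _ w => w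

/-- A transaction: a finite nonempty set of (identified) operations together with
a strict total order on them (the program order), modelled as a nonempty list of
operations tagged by pairwise distinct operation identifiers; the list order is
the program order `po`. -/
structure Txn (Key Val : Type) where
  ops : List (ℕ × Op Key Val)
  ops_nonempty : ops ≠ []
  ids_nodup : (ops.map Prod.fst).Nodup

/-- The operation of `T` at position `i` (in program order). -/
def Txn.opAt (T : Txn Key Val) (i : Fin T.ops.length) : Op Key Val :=
  (T.ops.get i).2

/-- `T ⊢ W(x,v)`: `T` writes to key `x` and `v` is the po-last value it writes to `x`. -/
def Txn.FWrites (T : Txn Key Val) (x : Key) (v : Val) : Prop :=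
  ∃ i : Fin T.ops.length, T.opAt i = Op.write x v ∧
    ∀ j : Fin T.ops.length, i < j → ∀ w : Val, T.opAt j ≠ Op.write x w

/-- `T ∈ WriteTx_x` : `T` writes to key `x`. -/
def Txn.WritesKey (T : Txn Key Val) (x : Key) : Prop :=
  ∃ v : Val, T.FWrites x v

/-- `T ⊢ R(x,v)`: `T` reads `x` before writing to it and `v` is the value returned
by the po-first such read (equivalently, the po-first operation of `T` on `x` is a
read returning `v`). -/
def Txn.FReads (T : Txn Key Val) (x : Key) (v : Val) : Prop :=
  ∃ i : Fin T.ops.length, T.opAt i = Op.read x v ∧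
    ∀ j : Fin T.ops.length, j < i → (T.opAt j).key ≠ x

/-- Internal consistency of a transaction: every read of a key `x` that is po-preceded
by an operation on `x` returns the value of the po-latest preceding operation on `x`. -/
def Txn.Internal (T : Txn Key Val) : Prop :=
  ∀ i j : Fin T.ops.length, j < i → ∀ (x : Key) (v : Val),
    T.opAt i = Op.read x v → (T.opAt j).key = x →
    (∀ k : Fin T.ops.length, j < k → k < i → (T.opAt k).key ≠ x) →
    (T.opAt j).val = v

/-- A history: a finite set of transactions with pairwise disjoint operation sets,
together with the session order `SO` (a union of strict total orders on the disjoint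
subsets, given by `sess`, partitioning the transactions), and a distinguished initial
transaction `init` (`T_⊥`) writing to every key and `SO`-preceding every other
transaction. -/
structure History (Key Val : Type) where
  txns : Set (Txn Key Val)
  txns_finite : txns.Finite
  SO : Txn Key Val → Txn Key Val → Prop
  sess : Txn Key Val → ℕ
  init : Txn Key Val
  ops_disjoint : ∀ T ∈ txns, ∀ S ∈ txns, T ≠ S →
      ∀ i ∈ T.ops.map Prod.fst, i ∉ S.ops.map Prod.fst
  so_mem : ∀ T S, SO T S → T ∈ txns ∧ S ∈ txns
  so_irrefl : ∀ T, ¬ SO T T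
  so_trans : ∀ T S U, SO T S → SO S U → SO T U
  so_total_sess : ∀ T ∈ txns, ∀ S ∈ txns, T ≠ S → sess T = sess S → SO T S ∨ SO S T
  so_sess : ∀ T S, SO T S → sess T = sess S ∨ T = init
  init_mem : init ∈ txns
  init_writes : ∀ x : Key, ∃ v : Val, init.FWrites x v
  init_so : ∀ T ∈ txns, T ≠ init → SO init T

/-- `H ⊨ Int`: every transaction of `H` is internally consistent. -/
def History.SatInt (H : History Key Val) : Prop :=
  ∀ T ∈ H.txns, T.Internal

/-- `r` is a strict total order on the set `s`. -/
def IsStrictTotalOrderOn {α : Type*} (s : Set α) (r : α → α → Prop) : Prop :=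
  (∀ a b, r a b → a ∈ s ∧ b ∈ s) ∧
  (∀ a, ¬ r a a) ∧
  (∀ a b c, r a b → r b c → r a c) ∧
  (∀ a ∈ s, ∀ b ∈ s, a ≠ b → r a b ∨ r b a)

/-- `H` satisfies SER: `H ⊨ Int` and there is a strict total order `co` on the
transactions of `H` extending `SO` such that every read `S ⊢ R(x,v)` reads the
value written by the `co`-greatest `co`-predecessor of `S` writing `x`. -/
def History.SatSER (H : History Key Val) : Prop :=
  H.SatInt ∧
  ∃ co : Txn Key Val → Txn Key Val → Prop,
    IsStrictTotalOrderOn H.txns co ∧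
    (∀ T S, H.SO T S → co T S) ∧
    ∀ S ∈ H.txns, ∀ (x : Key) (v : Val), S.FReads x v →
      ∃ T', co T' S ∧ T'.WritesKey x ∧
        (∀ T, co T S → T.WritesKey x → T = T' ∨ co T T') ∧
        T'.FWrites x v

/-! ### Dependency graphs -/

/-- `(WR, WW, RW)` extend the history `H` to a dependency graph. -/
def IsDepGraph (H : History Key Val)
    (WR WW RW : Key → Txn Key Val → Txn Key Val → Prop) : Prop :=
  (∀ (x : Key) (T S : Txn Key Val), WR x T S → T ∈ H.txns ∧ S ∈ H.txns) ∧
  (∀ x : Key, ∀ S ∈ H.txns, (∃ v, S.FReads x v) → ∃! T, WR x T S) ∧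
  (∀ (x : Key) (T S : Txn Key Val), WR x T S →
      T ≠ S ∧ ∃ v, T.FWrites x v ∧ S.FReads x v) ∧
  (∀ x : Key, IsStrictTotalOrderOn {T | T ∈ H.txns ∧ T.WritesKey x} (WW x)) ∧
  (∀ (x : Key) (T S : Txn Key Val),
      RW x T S ↔ T ≠ S ∧ ∃ T', WR x T' T ∧ WW x T' S)

/-- A binary relation is acyclic iff its transitive closure is irreflexive. -/
def RelAcyclic {α : Type*} (r : α → α → Prop) : Prop :=
  ∀ a, ¬ Relation.TransGen r a a

/-- The union `SO ∪ WR ∪ WW ∪ RW` as a binary relation on transactions. -/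
def DepUnion (H : History Key Val)
    (WR WW RW : Key → Txn Key Val → Txn Key Val → Prop) :
    Txn Key Val → Txn Key Val → Prop :=
  fun T S => H.SO T S ∨ (∃ x, WR x T S) ∨ (∃ x, WW x T S) ∨ (∃ x, RW x T S)

/-- The relation `(SO ∪ WR ∪ WW) ; RW?`. -/
def SIRel (H : History Key Val)
    (WR WW RW : Key → Txn Key Val → Txn Key Val → Prop) :
    Txn Key Val → Txn Key Val → Prop :=
  fun T S => ∃ U, (H.SO T U ∨ (∃ x, WR x T U) ∨ (∃ x, WW x T U)) ∧
    (U = S ∨ ∃ x, RW x U S)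

/-- `H` satisfies SI: `H ⊨ Int` and there exist `WR, WW, RW` extending `H` to a
dependency graph with `(SO ∪ WR ∪ WW) ; RW?` acyclic. -/
def History.SatSI (H : History Key Val) : Prop :=
  H.SatInt ∧ ∃ WR WW RW, IsDepGraph H WR WW RW ∧ RelAcyclic (SIRel H WR WW RW)

/-! ### Labeled edges and hyper-polygraphs -/

/-- Dependency edge labels. -/
inductive DepLbl (Key : Type) where
  | SO
  | WR (x : Key)
  | WW (x : Key)
  | RW (x : Key)

/-- A directed labeled edge. -/
structure LEdge (V L : Type) where
  src : V
  dst : V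
  lbl : L

variable {V L : Type}

abbrev DepEdge (V Key : Type) := LEdge V (DepLbl Key)
abbrev DepEdgeSet (V Key : Type) := Set (DepEdge V Key)

/-- There is an edge of `E` from `a` to `b`. -/
def EStep (E : Set (LEdge V L)) (a b : V) : Prop := ∃ l, LEdge.mk a b l ∈ E

/-- A set of labeled edges is cyclic iff some vertex has a nonempty edge path to itself. -/
def EdgeCyclic (E : Set (LEdge V L)) : Prop := ∃ a, Relation.TransGen (EStep E) a a

/-- `a ⤳ b`: there is a (possibly empty) edge path of `E` from `a` to `b`. -/
def EReach (E : Set (LEdge V L)) (a b : V) : Prop := Relation.ReflTransGen (EStep E) a b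

/-- A hyper-polygraph over the vertex type `V`: a known edge set `E` together with
the constraint collections `C^WW` and `C^WR`. -/
structure HyperPolygraph (V Key : Type) where
  E : DepEdgeSet V Key
  CWW : Set (DepEdgeSet V Key)
  CWR : Set (DepEdgeSet V Key)

/-- A directed labeled graph (given by its edge set `E'` over the same vertex set)
is compatible with the hyper-polygraph `G`. -/
def Compatible (G : HyperPolygraph V Key) (E' : DepEdgeSet V Key) : Prop :=
  G.E ⊆ E' ∧
  (∀ (x : Key) (T T' S : V), T ≠ S →
      LEdge.mk T' T (DepLbl.WR x) ∈ E' → LEdge.mk T' S (DepLbl.WW x) ∈ E' →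
      LEdge.mk T S (DepLbl.RW x) ∈ E') ∧
  (∀ C ∈ G.CWW ∪ G.CWR, ∃! e, e ∈ E' ∧ e ∈ C)

/-- A hyper-polygraph is SER-acyclic iff some acyclic graph is compatible with it. -/
def SERAcyclic (G : HyperPolygraph V Key) : Prop :=
  ∃ E', Compatible G E' ∧ ¬ EdgeCyclic E'

/-- The vertex set of the hyper-polygraph of a history: its transactions. -/
abbrev History.Vert (H : History Key Val) : Type := {T : Txn Key Val // T ∈ H.txns}

/-- The hyper-polygraph of a history `H`. -/
def History.hpg (H : History Key Val) : HyperPolygraph H.Vert Key where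
  E := {e | (e.lbl = DepLbl.SO ∧ H.SO e.src.1 e.dst.1) ∨
        (∃ (x : Key) (v : Val), e.lbl = DepLbl.WR x ∧
          e.dst.1.FReads x v ∧ e.src.1.FWrites x v ∧ e.src ≠ e.dst ∧
          (∀ T : H.Vert, T.1.FWrites x v → T ≠ e.dst → T = e.src))}
  CWW := {C | ∃ (x : Key) (T S : H.Vert), T ≠ S ∧
        T.1.WritesKey x ∧ S.1.WritesKey x ∧
        C = {LEdge.mk T S (DepLbl.WW x), LEdge.mk S T (DepLbl.WW x)}}
  CWR := {C | ∃ (x : Key) (S : H.Vert) (v : Val), S.1.FReads x v ∧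
        C = {e | ∃ T : H.Vert, T.1.FWrites x v ∧ T ≠ S ∧ e = LEdge.mk T S (DepLbl.WR x)}}

/-- The induced SI graph of a directed labeled graph:
`(E'_SO ∪ E'_WR ∪ E'_WW) ; (E'_RW)?`. -/
def InducedSI (E' : DepEdgeSet V Key) : V → V → Prop :=
  fun a b => ∃ c : V,
    (LEdge.mk a c DepLbl.SO ∈ E' ∨ (∃ x, LEdge.mk a c (DepLbl.WR x) ∈ E') ∨
      (∃ x, LEdge.mk a c (DepLbl.WW x) ∈ E')) ∧
    (c = b ∨ ∃ x, LEdge.mk c b (DepLbl.RW x) ∈ E')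

/-! ### Commit-order hyper-polygraphs -/

/-- Labels for commit-order hyper-polygraphs. -/
inductive COLbl (Key : Type) where
  | SO
  | WR (x : Key)
  | CO

abbrev COEdge (V Key : Type) := LEdge V (COLbl Key)

/-- A commit-order hyper-polygraph. -/
structure COHyperPolygraph (V Key : Type) where
  E : Set (COEdge V Key)
  CCO : Set (Set (COEdge V Key))
  CWR : Set (Set (COEdge V Key))

/-- The commit-order hyper-polygraph of a history `H`. -/
def History.cohpg (H : History Key Val) : COHyperPolygraph H.Vert Key where
  E := {e | (e.lbl = COLbl.SO ∧ H.SO e.src.1 e.dst.1) ∨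
        (∃ (x : Key) (v : Val), e.lbl = COLbl.WR x ∧
          e.dst.1.FReads x v ∧ e.src.1.FWrites x v ∧ e.src ≠ e.dst ∧
          (∀ T : H.Vert, T.1.FWrites x v → T ≠ e.dst → T = e.src))}
  CCO := {C | ∃ T S : H.Vert, T ≠ S ∧
        C = {LEdge.mk T S COLbl.CO, LEdge.mk S T COLbl.CO}}
  CWR := {C | ∃ (x : Key) (S : H.Vert) (v : Val), S.1.FReads x v ∧
        C = {e | ∃ T : H.Vert, T.1.FWrites x v ∧ T ≠ S ∧ e = LEdge.mk T S (COLbl.WR x)}}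

/-- A directed labeled graph (given by its edge set `E'`) is SER-compatible with the
commit-order hyper-polygraph of the history `H`. -/
def SERCompatible (H : History Key Val) (E' : Set (COEdge H.Vert Key)) : Prop :=
  H.cohpg.E ⊆ E' ∧
  (∀ C ∈ H.cohpg.CCO ∪ H.cohpg.CWR, ∃! e, e ∈ E' ∧ e ∈ C) ∧
  (∀ (x : Key) (T₁ T₂ T₃ : H.Vert), T₁ ≠ T₂ →
      LEdge.mk T₁ T₃ (COLbl.WR x) ∈ E' → T₂.1.WritesKey x →
      LEdge.mk T₂ T₃ COLbl.CO ∈ E' → LEdge.mk T₂ T₁ COLbl.CO ∈ E')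

/-- The read-from conditions of a dependency graph on a family `WR`. -/
def ReadFromConds (H : History Key Val)
    (WR : Key → Txn Key Val → Txn Key Val → Prop) : Prop :=
  (∀ (x : Key) (T S : Txn Key Val), WR x T S → T ∈ H.txns ∧ S ∈ H.txns) ∧
  (∀ x : Key, ∀ S ∈ H.txns, (∃ v, S.FReads x v) → ∃! T, WR x T S) ∧
  (∀ (x : Key) (T S : Txn Key Val), WR x T S →
      T ≠ S ∧ ∃ v, T.FWrites x v ∧ S.FReads x v)

/-! ### The pruning transition system -/

/-- `{(S,T',RW,x) : (T,S,WR,x) ∈ E, S ≠ T'}`: the RW edges derived from the WW edge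
`(T,T',WW,x)` and the WR edges of `E`. -/
def DerivedRWofWW (E : DepEdgeSet V Key) (T T' : V) (x : Key) : DepEdgeSet V Key :=
  {e | ∃ S : V, LEdge.mk T S (DepLbl.WR x) ∈ E ∧ S ≠ T' ∧
      e = LEdge.mk S T' (DepLbl.RW x)}

/-- `{(S,T',RW,x) : (T,T',WW,x) ∈ E, S ≠ T'}`: the RW edges derived from the WR edge
`(T,S,WR,x)` and the WW edges of `E`. -/
def DerivedRWofWR (E : DepEdgeSet V Key) (T S : V) (x : Key) : DepEdgeSet V Key :=
  {e | ∃ T' : V, LEdge.mk T T' (DepLbl.WW x) ∈ E ∧ S ≠ T' ∧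
      e = LEdge.mk S T' (DepLbl.RW x)}

/-- States of the pruning transition system: a triple `⟨E, C^WW, C^WR⟩` or the
terminal state `S#` (`bad`). -/
inductive PState (V Key : Type) where
  | node (E : DepEdgeSet V Key) (CWW CWR : Set (DepEdgeSet V Key)) : PState V Key
  | bad : PState V Key

/-- The pruning transition relation `↪`. -/
inductive PruneStep : PState V Key → PState V Key → Prop where
  | noChoice {E : DepEdgeSet V Key} {CWW CWR : Set (DepEdgeSet V Key)}
      (h : (∅ : DepEdgeSet V Key) ∈ CWW ∪ CWR) :
      PruneStep (.node E CWW CWR) .bad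
  | cyc {E : DepEdgeSet V Key} {CWW CWR : Set (DepEdgeSet V Key)}
      (h : EdgeCyclic E) :
      PruneStep (.node E CWW CWR) .bad
  | wwElim {E : DepEdgeSet V Key} {CWW CWR : Set (DepEdgeSet V Key)}
      {cons : DepEdgeSet V Key} {T T' : V} {x : Key}
      (hc : cons ∈ CWW) (he : LEdge.mk T T' (DepLbl.WW x) ∈ cons)
      (hcyc : EdgeCyclic (E ∪ {LEdge.mk T T' (DepLbl.WW x)} ∪ DerivedRWofWW E T T' x)) :
      PruneStep (.node E CWW CWR)
        (.node E ((CWW \ {cons}) ∪ {cons \ {LEdge.mk T T' (DepLbl.WW x)}}) CWR)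
  | wrElim {E : DepEdgeSet V Key} {CWW CWR : Set (DepEdgeSet V Key)}
      {cons : DepEdgeSet V Key} {T S : V} {x : Key}
      (hc : cons ∈ CWR) (he : LEdge.mk T S (DepLbl.WR x) ∈ cons)
      (hcyc : EdgeCyclic (E ∪ {LEdge.mk T S (DepLbl.WR x)} ∪ DerivedRWofWR E T S x)) :
      PruneStep (.node E CWW CWR)
        (.node E CWW ((CWR \ {cons}) ∪ {cons \ {LEdge.mk T S (DepLbl.WR x)}}))
  | wwIntro {E : DepEdgeSet V Key} {CWW CWR : Set (DepEdgeSet V Key)}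
      {T T' : V} {x : Key}
      (hc : ({LEdge.mk T T' (DepLbl.WW x)} : DepEdgeSet V Key) ∈ CWW) :
      PruneStep (.node E CWW CWR)
        (.node (E ∪ {LEdge.mk T T' (DepLbl.WW x)} ∪ DerivedRWofWW E T T' x)
          (CWW \ {{LEdge.mk T T' (DepLbl.WW x)}}) CWR)
  | wrIntro {E : DepEdgeSet V Key} {CWW CWR : Set (DepEdgeSet V Key)}
      {T S : V} {x : Key}
      (hc : ({LEdge.mk T S (DepLbl.WR x)} : DepEdgeSet V Key) ∈ CWR) :
      PruneStep (.node E CWW CWR)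
        (.node (E ∪ {LEdge.mk T S (DepLbl.WR x)} ∪ DerivedRWofWR E T S x)
          CWW (CWR \ {{LEdge.mk T S (DepLbl.WR x)}}))

/-! ### Boolean encoding -/

/-- The edges occurring in some constraint of `G` (i.e. the edges carrying a
Boolean variable, besides the RW variables). -/
def ConsEdges (G : HyperPolygraph V Key) : DepEdgeSet V Key :=
  ⋃₀ (G.CWW ∪ G.CWR)

/-- The truth value, under the assignment `α`, of the literal associated with an
edge: the constant true if the edge lies in `G.E`, and its variable's value
otherwise. -/
def EdgeVal (G : HyperPolygraph V Key) (α : DepEdge V Key → Prop)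
    (e : DepEdge V Key) : Prop :=
  e ∈ G.E ∨ α e

/-- `α` satisfies the Boolean encoding `Φ_G` of the hyper-polygraph `G`. -/
def SatPhi (G : HyperPolygraph V Key) (α : DepEdge V Key → Prop) : Prop :=
  (∀ C ∈ G.CWW ∪ G.CWR, ∃ e ∈ C, α e) ∧
  (∀ C ∈ G.CWW ∪ G.CWR, ∀ e ∈ C, ∀ e' ∈ C, e ≠ e' → ¬(α e ∧ α e')) ∧
  (∀ (x : Key) (T T' S : V), S ≠ T' →
      (LEdge.mk T T' (DepLbl.WW x) ∈ G.E ∨ LEdge.mk T T' (DepLbl.WW x) ∈ ConsEdges G) →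
      (LEdge.mk T S (DepLbl.WR x) ∈ G.E ∨ LEdge.mk T S (DepLbl.WR x) ∈ ConsEdges G) →
      EdgeVal G α (LEdge.mk T T' (DepLbl.WW x)) →
      EdgeVal G α (LEdge.mk T S (DepLbl.WR x)) →
      α (LEdge.mk S T' (DepLbl.RW x)))

/-- The graph induced by the assignment `α`: `G.E` together with all constraint
edges and RW edges whose variables `α` sets to true. -/
def InducedOf (G : HyperPolygraph V Key) (α : DepEdge V Key → Prop) :
    DepEdgeSet V Key :=
  G.E ∪ {e | e ∈ ConsEdges G ∧ α e} ∪
    {e | (∃ (x : Key) (S T' : V), S ≠ T' ∧ e = LEdge.mk S T' (DepLbl.RW x)) ∧ α e}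

/-- `α` satisfies all 2-width-cycle clauses of `G`. -/
def SatPairClauses (G : HyperPolygraph V Key) (α : DepEdge V Key → Prop) : Prop :=
  (∀ e₁ e₂ : DepEdge V Key, e₁ ∈ ConsEdges G → e₂ ∈ ConsEdges G → e₁ ≠ e₂ →
      EReach G.E e₁.dst e₂.src → EReach G.E e₂.dst e₁.src → ¬(α e₁ ∧ α e₂)) ∧
  (∀ (x : Key) (T T' S : V), T' ≠ T → T' ≠ S → EReach G.E T' S →
      LEdge.mk T T' (DepLbl.WW x) ∈ ConsEdges G →
      LEdge.mk T S (DepLbl.WR x) ∈ ConsEdges G →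
      ¬(α (LEdge.mk T T' (DepLbl.WW x)) ∧ α (LEdge.mk T S (DepLbl.WR x))))

/-! ### Auxiliary material for the SER theorem -/

/-- The value returned by the po-first read of a key is unique. -/
lemma Txn.freads_eq {T : Txn Key Val} {x : Key} {v v' : Val}
    (h : T.FReads x v) (h' : T.FReads x v') : v = v' := by
  obtain ⟨i, hi, hmin⟩ := h
  obtain ⟨i', hi', hmin'⟩ := h'
  rcases lt_trichotomy i i' with hlt | heq | hlt
  · exact absurd (by rw [hi]; rfl) (hmin' i hlt)
  · subst heq
    rw [hi] at hi'
    exact (Op.read.injEq _ _ _ _ ▸ hi').2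
  · exact absurd (by rw [hi']; rfl) (hmin i' hlt)

section SERfwd

variable {H : History Key Val} {co : Txn Key Val → Txn Key Val → Prop}

/-- WR edges to the `co`-maximal preceding writer. -/
def WRmax (H : History Key Val) (co : Txn Key Val → Txn Key Val → Prop) :
    DepEdgeSet H.Vert Key :=
  {e | ∃ (x : Key) (v : Val), e.lbl = DepLbl.WR x ∧ e.dst.1.FReads x v ∧
    e.src.1.FWrites x v ∧ co e.src.1 e.dst.1 ∧
    ∀ T, co T e.dst.1 → T.WritesKey x → T = e.src.1 ∨ co T e.src.1}

/-- WW edges following `co`. -/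
def WWco (H : History Key Val) (co : Txn Key Val → Txn Key Val → Prop) :
    DepEdgeSet H.Vert Key :=
  {e | ∃ x : Key, e.lbl = DepLbl.WW x ∧ e.src.1.WritesKey x ∧ e.dst.1.WritesKey x ∧
    co e.src.1 e.dst.1}

/-- Derived RW edges. -/
def RWder (H : History Key Val) (co : Txn Key Val → Txn Key Val → Prop) :
    DepEdgeSet H.Vert Key :=
  {e | ∃ (x : Key) (T' : H.Vert), e.lbl = DepLbl.RW x ∧ e.src ≠ e.dst ∧
    LEdge.mk T' e.src (DepLbl.WR x) ∈ H.hpg.E ∪ WRmax H co ∧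
    LEdge.mk T' e.dst (DepLbl.WW x) ∈ WWco H co}

/-- The compatible graph constructed from a serialization order. -/
def SERGraph (H : History Key Val) (co : Txn Key Val → Txn Key Val → Prop) :
    DepEdgeSet H.Vert Key :=
  H.hpg.E ∪ WRmax H co ∪ WWco H co ∪ RWder H co

/-- WR-labelled edges of the constructed graph all lie in `WRmax`. -/
lemma wr_class
    (hmem : ∀ a b, co a b → a ∈ H.txns ∧ b ∈ H.txns)
    (hirr : ∀ a, ¬ co a a)
    (hread : ∀ S ∈ H.txns, ∀ (x : Key) (v : Val), Txn.FReads S x v →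
      ∃ T', co T' S ∧ T'.WritesKey x ∧
        (∀ T, co T S → T.WritesKey x → T = T' ∨ co T T') ∧ T'.FWrites x v)
    {e : DepEdge H.Vert Key}
    (he : e ∈ SERGraph H co) (hl : ∃ x : Key, e.lbl = DepLbl.WR x) :
    e ∈ WRmax H co := by
  obtain ⟨x, hx⟩ := hl
  rcases he with ((hE | hWR) | hWW) | hRW
  · rcases hE with ⟨hso, _⟩ | ⟨x', v, hlbl, hrd, hwrt, hne, huniq⟩
    · rw [hx] at hso; exact absurd hso (by simp)
    · obtain ⟨T', hco', hwk', hmax', hfw'⟩ := hread e.dst.1 e.dst.2 x' v hrd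
      have hT'mem : T' ∈ H.txns := (hmem _ _ hco').1
      have hvne : (⟨T', hT'mem⟩ : H.Vert) ≠ e.dst := by
        intro h
        exact hirr e.dst.1 ((congrArg Subtype.val h) ▸ hco')
      have hveq : (⟨T', hT'mem⟩ : H.Vert) = e.src := huniq ⟨T', hT'mem⟩ hfw' hvne
      have hts : T' = e.src.1 := congrArg Subtype.val hveq
      subst hts
      exact ⟨x', v, hlbl, hrd, hfw', hco', fun T hT hw => hmax' T hT hw⟩
  · exact hWR
  · obtain ⟨x', hlbl, _⟩ := hWW
    rw [hx] at hlbl; exact absurd hlbl (by simp)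
  · obtain ⟨x', _, hlbl, _⟩ := hRW
    rw [hx] at hlbl; exact absurd hlbl (by simp)

/-- WW-labelled edges of the constructed graph all lie in `WWco`. -/
lemma ww_class {e : DepEdge H.Vert Key}
    (he : e ∈ SERGraph H co) (hl : ∃ x : Key, e.lbl = DepLbl.WW x) :
    e ∈ WWco H co := by
  obtain ⟨x, hx⟩ := hl
  rcases he with ((hE | hWR) | hWW) | hRW
  · rcases hE with ⟨hso, _⟩ | ⟨x', v, hlbl, _⟩
    · rw [hx] at hso; exact absurd hso (by simp)
    · rw [hx] at hlbl; exact absurd hlbl (by simp)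
  · obtain ⟨x', v, hlbl, _⟩ := hWR
    rw [hx] at hlbl; exact absurd hlbl (by simp)
  · exact hWW
  · obtain ⟨x', _, hlbl, _⟩ := hRW
    rw [hx] at hlbl; exact absurd hlbl (by simp)

/-- Every edge of the constructed graph goes forward in `co`. -/
lemma sergraph_incr
    (hmem : ∀ a b, co a b → a ∈ H.txns ∧ b ∈ H.txns)
    (hirr : ∀ a, ¬ co a a)
    (htrans : ∀ a b c, co a b → co b c → co a c)
    (htot : ∀ a ∈ H.txns, ∀ b ∈ H.txns, a ≠ b → co a b ∨ co b a)
    (hread : ∀ S ∈ H.txns, ∀ (x : Key) (v : Val), Txn.FReads S x v →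
      ∃ T', co T' S ∧ T'.WritesKey x ∧
        (∀ T, co T S → T.WritesKey x → T = T' ∨ co T T') ∧ T'.FWrites x v)
    (hso : ∀ T S, H.SO T S → co T S) {e : DepEdge H.Vert Key}
    (he : e ∈ SERGraph H co) : co e.src.1 e.dst.1 := by
  have hcopy := he
  rcases he with ((hE | hWR) | hWW) | hRW
  · rcases hE with ⟨_, hSO⟩ | ⟨x', v, hlbl, _⟩
    · exact hso _ _ hSO
    · obtain ⟨_, _, _, _, _, hco, _⟩ := wr_class hmem hirr hread hcopy ⟨x', hlbl⟩
      exact hco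
  · obtain ⟨_, _, _, _, _, hco, _⟩ := hWR
    exact hco
  · obtain ⟨_, _, _, _, hco⟩ := hWW
    exact hco
  · obtain ⟨x, T', hlbl, hne, hwr, hww⟩ := hRW
    have hwr' : LEdge.mk T' e.src (DepLbl.WR x) ∈ WRmax H co :=
      wr_class hmem hirr hread (Or.inl (Or.inl hwr)) ⟨x, rfl⟩
    obtain ⟨x₀, v, hl, hrd, hfw, hco, hmax⟩ := hwr'
    have hx₀ : x₀ = x := by
      have : DepLbl.WR (Key := Key) x = DepLbl.WR x₀ := hl
      exact (DepLbl.WR.injEq _ _ ▸ this).symm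
    subst hx₀
    obtain ⟨x₁, hl₁, hwsrc, hwdst, hco₁⟩ := hww
    have hx₁ : x₁ = x₀ := by
      have : DepLbl.WW (Key := Key) x₀ = DepLbl.WW x₁ := hl₁
      exact (DepLbl.WW.injEq _ _ ▸ this).symm
    subst hx₁
    have hvne : e.src.1 ≠ e.dst.1 := fun h => hne (Subtype.ext h)
    rcases htot _ e.src.2 _ e.dst.2 hvne with h | h
    · exact h
    · rcases hmax e.dst.1 h hwdst with heq | hlt
      · exact absurd (heq ▸ hco₁) (hirr _)
      · exact absurd (htrans _ _ _ hco₁ hlt) (hirr _)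

end SERfwd

/-- Theorem (SER via hyper-polygraphs): `H` satisfies SER iff `H ⊨ Int` and there
exists an acyclic directed labeled graph compatible with the hyper-polygraph of `H`. -/
theorem ser_iff_exists_acyclic_compatible (Key Val : Type) (H : History Key Val) :
    H.SatSER ↔
      H.SatInt ∧ ∃ E' : DepEdgeSet H.Vert Key, Compatible H.hpg E' ∧ ¬ EdgeCyclic E' := by
  constructor
  · -- Forward direction
    rintro ⟨hint, co, ⟨hmem, hirr, htrans, htot⟩, hsoco, hread⟩
    have hasym : ∀ a b, co a b → co b a → False :=
      fun a b h1 h2 => hirr a (htrans _ _ _ h1 h2)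
    refine ⟨hint, SERGraph H co, ⟨?_, ?_, ?_⟩, ?_⟩
    · -- G.E ⊆ E'
      exact fun e he => Or.inl (Or.inl (Or.inl he))
    · -- RW closure
      intro x T T' S hTS hwr hww
      have hww' : LEdge.mk T' S (DepLbl.WW x) ∈ WWco H co :=
        ww_class hww ⟨x, rfl⟩
      have hwr' : LEdge.mk T' T (DepLbl.WR x) ∈ WRmax H co :=
        wr_class hmem hirr hread hwr ⟨x, rfl⟩
      exact Or.inr ⟨x, T', rfl, hTS, Or.inr hwr', hww'⟩
    · -- constraints
      rintro C (hC | hC)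
      · -- CWW constraint
        obtain ⟨x, T, S, hTS, hwT, hwS, rfl⟩ := hC
        have hvne : T.1 ≠ S.1 := fun h => hTS (Subtype.ext h)
        have key : ∀ A B : H.Vert, A.1.WritesKey x → B.1.WritesKey x → co A.1 B.1 →
            ∃! e, e ∈ SERGraph H co ∧
              e ∈ ({LEdge.mk A B (DepLbl.WW x), LEdge.mk B A (DepLbl.WW x)} :
                DepEdgeSet H.Vert Key) := by
          intro A B hwA hwB hco
          refine ⟨LEdge.mk A B (DepLbl.WW x),
            ⟨Or.inl (Or.inr ⟨x, rfl, hwA, hwB, hco⟩), Or.inl rfl⟩, ?_⟩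
          rintro e ⟨heE, he | he⟩
          · exact he
          · exfalso
            rcases he with rfl
            have := ww_class heE ⟨x, rfl⟩
            obtain ⟨x₁, hl₁, _, _, hco'⟩ := this
            exact hasym _ _ hco hco'
        rcases htot _ T.2 _ S.2 hvne with h | h
        · exact key T S hwT hwS h
        · obtain ⟨e, he, hu⟩ := key S T hwS hwT h
          refine ⟨e, ⟨he.1, ?_⟩, ?_⟩
          · rcases he.2 with rfl | rfl
            · exact Or.inr rfl
            · exact Or.inl rfl
          · rintro e' ⟨he'E, he'⟩
            refine hu e' ⟨he'E, ?_⟩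
            rcases he' with rfl | rfl
            · exact Or.inr rfl
            · exact Or.inl rfl
      · -- CWR constraint
        obtain ⟨x, S, v, hr, rfl⟩ := hC
        obtain ⟨T', hcoT', hwkT', hmaxT', hfwT'⟩ := hread S.1 S.2 x v hr
        have hT'mem : T' ∈ H.txns := (hmem _ _ hcoT').1
        set Tv : H.Vert := ⟨T', hT'mem⟩ with hTv
        have hTvS : Tv ≠ S := fun h => hirr S.1 ((congrArg Subtype.val h) ▸ hcoT')
        refine ⟨LEdge.mk Tv S (DepLbl.WR x),
          ⟨Or.inl (Or.inl (Or.inr ⟨x, v, rfl, hr, hfwT', hcoT', hmaxT'⟩)),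
            ⟨Tv, hfwT', hTvS, rfl⟩⟩, ?_⟩
        rintro e ⟨heE, Uv, hUw, hUne, rfl⟩
        have hwr' := wr_class hmem hirr hread heE ⟨x, rfl⟩
        obtain ⟨x₁, v₁, hl₁, hrd₁, hfw₁, hco₁, hmax₁⟩ := hwr'
        have hx₁ : x₁ = x := by
          have : DepLbl.WR (Key := Key) x = DepLbl.WR x₁ := hl₁
          exact (DepLbl.WR.injEq _ _ ▸ this).symm
        subst hx₁
        have hv₁ : v₁ = v := Txn.freads_eq hrd₁ hr
        rw [hv₁] at hfw₁
        have : Uv.1 = T' := by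
          rcases hmaxT' Uv.1 hco₁ ⟨v, hfw₁⟩ with h | h
          · exact h
          · rcases hmax₁ T' hcoT' hwkT' with h' | h'
            · exact h'.symm
            · exact absurd (htrans _ _ _ h h') (hirr _)
        have : Uv = Tv := Subtype.ext this
        rw [this]
    · -- acyclicity
      rintro ⟨a, hcyc⟩
      have step : ∀ b c : H.Vert, EStep (SERGraph H co) b c → co b.1 c.1 := by
        rintro b c ⟨l, hl⟩
        exact sergraph_incr hmem hirr htrans htot hread hsoco hl
      have : ∀ b : H.Vert, Relation.TransGen (EStep (SERGraph H co)) a b → co a.1 b.1 := by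
        intro b hb
        induction hb with
        | single h => exact step _ _ h
        | tail _ h ih => exact htrans _ _ _ ih (step _ _ h)
      exact hirr a.1 (this a hcyc)
  · -- Backward direction
    rintro ⟨hint, E', ⟨hsub, hclose, hcons⟩, hacyc⟩
    refine ⟨hint, ?_⟩
    have hpo : IsPartialOrder H.Vert (Relation.ReflTransGen (EStep E')) :=
      { refl := fun _ => Relation.ReflTransGen.refl
        trans := fun _ _ _ => Relation.ReflTransGen.trans
        antisymm := fun a b hab hba => by
          by_contra hne
          rcases Relation.reflTransGen_iff_eq_or_transGen.mp hab with h | h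
          · exact hne h.symm
          · exact hacyc ⟨a, Relation.TransGen.trans_right (Relation.TransGen.to_reflTransGen h) (Relation.reflTransGen_iff_eq_or_transGen.mp hba |>.elim (fun hv => hv ▸ h) id)⟩ }
    obtain ⟨s, hs, hps⟩ := @extend_partialOrder H.Vert (Relation.ReflTransGen (EStep E')) hpo
    have strans : ∀ a b c : H.Vert, s a b → s b c → s a c := fun a b c h1 h2 =>
      hs.1.1.2.1 a b c h1 h2
    have santi : ∀ a b : H.Vert, s a b → s b a → a = b := fun a b h1 h2 =>
      hs.1.2.1 a b h1 h2
    have stot : ∀ a b : H.Vert, s a b ∨ s b a := fun a b => hs.2.1 a b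
    have hstep : ∀ (a b : H.Vert) (l : DepLbl Key), LEdge.mk a b l ∈ E' → s a b :=
      fun a b l h => hps _ _ (Relation.ReflTransGen.single ⟨l, h⟩)
    refine ⟨fun T S => ∃ (hT : T ∈ H.txns) (hS : S ∈ H.txns), T ≠ S ∧ s ⟨T, hT⟩ ⟨S, hS⟩,
      ⟨?_, ?_, ?_, ?_⟩, ?_, ?_⟩
    · rintro a b ⟨hA, hB, _, _⟩; exact ⟨hA, hB⟩
    · rintro a ⟨_, _, hne, _⟩; exact hne rfl
    · rintro a b c ⟨ha, hb, hab, h1⟩ ⟨hb', hc, hbc, h2⟩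
      refine ⟨ha, hc, ?_, strans _ _ _ h1 h2⟩
      rintro rfl
      exact hab (congrArg Subtype.val (santi _ _ h1 h2))
    · intro a ha b hb hne
      rcases stot ⟨a, ha⟩ ⟨b, hb⟩ with h | h
      · exact Or.inl ⟨ha, hb, hne, h⟩
      · exact Or.inr ⟨hb, ha, hne.symm, h⟩
    · -- SO ⊆ co
      intro T S hTS
      obtain ⟨hT, hS⟩ := H.so_mem T S hTS
      have hne : T ≠ S := fun h => H.so_irrefl T (h ▸ hTS)
      exact ⟨hT, hS, hne, hstep ⟨T, hT⟩ ⟨S, hS⟩ DepLbl.SO (hsub (Or.inl ⟨rfl, hTS⟩))⟩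
    · -- read condition
      intro S hS x v hr
      set Sv : H.Vert := ⟨S, hS⟩ with hSv
      have hC : ({e | ∃ T : H.Vert, T.1.FWrites x v ∧ T ≠ Sv ∧
          e = LEdge.mk T Sv (DepLbl.WR x)} : DepEdgeSet H.Vert Key) ∈
          H.hpg.CWW ∪ H.hpg.CWR := Or.inr ⟨x, Sv, v, hr, rfl⟩
      obtain ⟨e, ⟨heE, Tv, hTw, hTne, rfl⟩, _⟩ := hcons _ hC
      have hTvS : Tv.1 ≠ S := fun h => hTne (Subtype.ext h)
      refine ⟨Tv.1, ⟨Tv.2, hS, hTvS, hstep Tv Sv _ heE⟩, ⟨v, hTw⟩, ?_, hTw⟩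
      intro T hcoT hTwk
      by_cases hTT : T = Tv.1
      · exact Or.inl hTT
      obtain ⟨hT, _, hTneS, hsT⟩ := hcoT
      have hvne : (⟨T, hT⟩ : H.Vert) ≠ Tv := fun h => hTT (congrArg Subtype.val h)
      have hC' : ({LEdge.mk (⟨T, hT⟩ : H.Vert) Tv (DepLbl.WW x),
          LEdge.mk Tv (⟨T, hT⟩ : H.Vert) (DepLbl.WW x)} : DepEdgeSet H.Vert Key) ∈
          H.hpg.CWW ∪ H.hpg.CWR :=
        Or.inl ⟨x, ⟨T, hT⟩, Tv, hvne, hTwk, ⟨v, hTw⟩, rfl⟩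
      obtain ⟨e', ⟨he'E, he'⟩, _⟩ := hcons _ hC'
      rcases he' with rfl | rfl
      · exact Or.inr ⟨hT, Tv.2, hTT, hstep _ _ _ he'E⟩
      · exfalso
        have hSvTv : Sv ≠ (⟨T, hT⟩ : H.Vert) := fun h =>
          hTneS (congrArg Subtype.val h).symm
        have hrw : LEdge.mk Sv (⟨T, hT⟩ : H.Vert) (DepLbl.RW x) ∈ E' :=
          hclose x Sv Tv ⟨T, hT⟩ hSvTv heE he'E
        have h1 : s Sv ⟨T, hT⟩ := hstep _ _ _ hrw
        exact hTneS (congrArg Subtype.val (santi _ _ hsT h1))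

end DBIso
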